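/- arXiv:1905.01873 — 4 statements merged into one kernel-verified Lean document; each statement's English description precedes it below -/
import Mathlib

section
/- Let k ≥ 1 be an integer and let p, q ∈ ℕ with p ≥ k·q. Let b = b₁⋯b_{p+q} be a binary word in {0,1}^{p+q} with exactly p letters equal to 0 and q letters equal to 1. Then exactly p − k·q of the p+q cyclic rotations b_j b_{j+1} ⋯ b_{p+q} b₁ ⋯ b_{j−1} (for 1 ≤ j ≤ p+q) are k-dominating. -/
/-!
Measure a word by its balance `#0 - k·#1`; it is `k`-dominating iff every nonempty prefix has
positive balance. If `q > 0`, some rotation of `b` begins with the block `0^k 1`: otherwise every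
`1` would be preceded cyclically by fewer than `k` zeros, forcing `p < kq`. The block has balance
`0` and no prefix of negative balance, so cutting it out does not change whether a rotation
starting after it is dominating, while the `k + 1` rotations starting inside it fail at their
first `1`. Hence the count for `(p, q)` equals the count for `(p - k, q - 1)`, down to the word
`0^p`, all of whose `p` rotations are dominating.
-/

/-- A binary word (list of Booleans, where `false` stands for the letter 0 and `true`
for the letter 1) is `k`-dominating if every nonempty prefix contains strictly more
than `k` times as many 0's as 1's. -/
def Dominating (k : ℕ) (w : List Bool) : Prop :=
  ∀ i ∈ Finset.Icc 1 w.length,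
    k * ((w.take i).count true) < (w.take i).count false

namespace List

variable {α : Type*}

theorem prefix_append_iff {x u v : List α} :
    x <+: u ++ v ↔ x <+: u ∨ ∃ y, y <+: v ∧ x = u ++ y := by
  constructor
  · rintro ⟨r, h⟩
    rcases append_eq_append_iff.mp h with ⟨a, rfl, -⟩ | ⟨c, rfl, rfl⟩
    · exact .inl (prefix_append _ _)
    · exact .inr ⟨c, prefix_append _ _, rfl⟩
  · rintro (h | ⟨y, hy, rfl⟩)
    · exact prefix_append_of_prefix h
    · exact (prefix_append_right_inj u).mpr hy

theorem rotate_append_of_le_length {x : List α} {j : ℕ} (hj : j ≤ x.length) (y : List α) :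
    (x ++ y).rotate j = x.drop j ++ y ++ x.take j := by
  rw [rotate_eq_drop_append_take (by rw [length_append]; omega), drop_append_of_le_length hj,
    take_append_of_le_length hj]

end List

open List

section RotationIndices

variable {α : Type*} (P : List α → Prop)

def rotationIndices (l : List α) : Set ℕ :=
  {j | j < l.length ∧ P (l.rotate j)}

variable {P}

theorem ncard_rotationIndices_le_of_isRotated {l l' : List α} (h : l ~r l') :
    (rotationIndices P l').ncard ≤ (rotationIndices P l).ncard := by
  obtain ⟨m, rfl⟩ := h
  refine Set.ncard_le_ncard_of_injOn (fun j => (m + j) % l.length) ?_ ?_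
    ((Set.finite_lt_nat l.length).subset fun j hj => hj.1)
  · rintro j ⟨hj, hP⟩
    rw [length_rotate] at hj
    refine ⟨Nat.mod_lt _ (by omega), ?_⟩
    rwa [rotate_mod, ← rotate_rotate]
  · rintro j₁ ⟨h₁, -⟩ j₂ ⟨h₂, -⟩ heq
    rw [length_rotate] at h₁ h₂
    simpa [Nat.ModEq, Nat.mod_eq_of_lt h₁, Nat.mod_eq_of_lt h₂] using
      Nat.ModEq.add_left_cancel' m heq

theorem List.IsRotated.ncard_rotationIndices_eq {l l' : List α} (h : l ~r l') :
    (rotationIndices P l).ncard = (rotationIndices P l').ncard :=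
  le_antisymm (ncard_rotationIndices_le_of_isRotated h.symm)
    (ncard_rotationIndices_le_of_isRotated h)

end RotationIndices

def balance (k : ℕ) (w : List Bool) : ℤ :=
  w.count false - k * w.count true

section Balance

variable {k : ℕ}

@[simp]
theorem balance_nil : balance k [] = 0 := by
  simp [balance]

@[simp]
theorem balance_append (u v : List Bool) : balance k (u ++ v) = balance k u + balance k v := by
  simp only [balance, count_append]
  push_cast
  ring

@[simp]
theorem balance_cons_false (w : List Bool) : balance k (false :: w) = 1 + balance k w := by
  rw [← singleton_append, balance_append, show balance k [false] = 1 by simp [balance]]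

@[simp]
theorem balance_cons_true (w : List Bool) : balance k (true :: w) = -k + balance k w := by
  rw [← singleton_append, balance_append, show balance k [true] = -k by simp [balance]]

@[simp]
theorem balance_replicate_false (m : ℕ) : balance k (replicate m false) = m := by
  simp [balance, count_replicate]

theorem balance_nonneg_iff {w : List Bool} :
    0 ≤ balance k w ↔ k * w.count true ≤ w.count false := by
  rw [balance, sub_nonneg]
  norm_cast

theorem balance_pos_iff {w : List Bool} : 0 < balance k w ↔ k * w.count true < w.count false := by
  rw [balance, sub_pos]
  norm_cast

end Balance

section Dominating

variable {k : ℕ}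

theorem dominating_iff_forall_prefix {w : List Bool} :
    Dominating k w ↔ ∀ x, x <+: w → x ≠ [] → 0 < balance k x := by
  simp only [balance_pos_iff]
  constructor
  · intro h x hx hne
    rw [prefix_iff_eq_take.mp hx]
    exact h _ (Finset.mem_Icc.mpr ⟨length_pos_iff.mpr hne, hx.length_le⟩)
  · intro h i hi
    rw [Finset.mem_Icc] at hi
    refine h _ (take_prefix _ _) ?_
    rw [← length_pos_iff, length_take]
    omega

theorem not_dominating_replicate_false_append_true {m : ℕ} (hm : m ≤ k) (s : List Bool) :
    ¬ Dominating k (replicate m false ++ true :: s) := by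
  rw [dominating_iff_forall_prefix]
  intro h
  have := h (replicate m false ++ [true]) ⟨s, by simp⟩ (by simp)
  simp only [balance_append, balance_replicate_false, balance_cons_true, balance_nil] at this
  omega

theorem dominating_of_true_not_mem {w : List Bool} (hw : true ∉ w) : Dominating k w := by
  rw [dominating_iff_forall_prefix]
  intro x hx hne
  have hx : x = replicate x.length false :=
    eq_replicate_of_mem fun b hb => Bool.eq_false_iff.mpr fun hb' => hw (hb' ▸ hx.subset hb)
  rw [hx, balance_replicate_false]
  exact_mod_cast length_pos_iff.mpr hne

theorem dominating_append_iff {u : List Bool} (hu : u ≠ []) (v : List Bool) :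
    Dominating k (u ++ v) ↔
      Dominating k u ∧ ∀ y, y <+: v → 0 < balance k u + balance k y := by
  simp only [dominating_iff_forall_prefix, prefix_append_iff, or_imp, forall_and,
    forall_exists_index, and_imp]
  refine and_congr_right fun _ => ⟨fun h y hy => ?_, ?_⟩
  · simpa using h _ y hy rfl (by simp [hu])
  · rintro h _ y hy rfl -
    simpa using h y hy

theorem dominating_append_block_append_iff {u : List Bool} (hu : u ≠ []) (v : List Bool) :
    Dominating k (u ++ (replicate k false ++ true :: v)) ↔ Dominating k (u ++ v) := by
  rw [dominating_append_iff hu, dominating_append_iff hu]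
  refine and_congr_right fun hdu => ?_
  have hpos := dominating_iff_forall_prefix.mp hdu u (prefix_refl u) hu
  have hblock : balance k (replicate k false ++ [true]) = 0 := by simp
  rw [show replicate k false ++ true :: v = (replicate k false ++ [true]) ++ v by simp]
  simp only [prefix_append_iff (u := replicate k false ++ [true]), or_imp, forall_and,
    forall_exists_index, and_imp]
  constructor
  · rintro ⟨-, h⟩ z hz
    simpa [hblock] using h _ z hz rfl
  · refine fun h => ⟨fun y hy => ?_, fun y z hz hy => ?_⟩
    · rcases prefix_concat_iff.mp hy with rfl | hy
      · rwa [hblock, add_zero]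
      · rw [(prefix_replicate_iff.mp hy).2, balance_replicate_false]
        exact add_pos_of_pos_of_nonneg hpos (Nat.cast_nonneg _)
    · simpa [hy, hblock] using h z hz

theorem not_dominating_rotate_replicate_append {j : ℕ} (hj : j ≤ k) (t : List Bool) :
    ¬ Dominating k ((replicate k false ++ true :: t).rotate j) := by
  rw [rotate_append_of_le_length (by simpa using hj), drop_replicate, take_replicate]
  simpa using not_dominating_replicate_false_append_true (Nat.sub_le k j) _

theorem dominating_rotate_replicate_append_iff {t : List Bool} {i : ℕ} (hi : i < t.length) :
    Dominating k ((replicate k false ++ true :: t).rotate (i + (k + 1))) ↔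
      Dominating k (t.rotate i) := by
  have hB : (replicate k false ++ [true]).length = k + 1 := by simp
  rw [show replicate k false ++ true :: t = (replicate k false ++ [true]) ++ t by simp,
    Nat.add_comm, ← rotate_rotate, ← hB, rotate_append_length_eq,
    rotate_append_of_le_length hi.le, rotate_eq_drop_append_take hi.le, append_assoc,
    append_assoc, singleton_append]
  exact dominating_append_block_append_iff (by simpa using hi) _

theorem rotationIndices_dominating_replicate_append (t : List Bool) :
    rotationIndices (Dominating k) (replicate k false ++ true :: t) =
      (· + (k + 1)) '' rotationIndices (Dominating k) t := by
  ext j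
  simp only [rotationIndices, Set.mem_image, Set.mem_ofPred_eq, length_append, length_replicate,
    length_cons]
  constructor
  · rintro ⟨hj, hd⟩
    rcases le_or_gt j k with hjk | hjk
    · exact absurd hd (not_dominating_rotate_replicate_append hjk t)
    · obtain ⟨i, rfl⟩ : ∃ i, j = i + (k + 1) := ⟨j - (k + 1), by omega⟩
      exact ⟨i, ⟨by omega, (dominating_rotate_replicate_append_iff (by omega)).mp hd⟩, rfl⟩
  · rintro ⟨i, ⟨hi, hd⟩, rfl⟩
    exact ⟨by omega, (dominating_rotate_replicate_append_iff hi).mpr hd⟩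

theorem exists_replicate_false_append_eq_append_block (a : ℕ) (w : List Bool)
    (h : (k : ℤ) ≤ a + balance k w) :
    ∃ u v, replicate a false ++ w ++ [true] = u ++ (replicate k false ++ true :: v) := by
  induction w generalizing a with
  | nil =>
    refine ⟨replicate (a - k) false, [], ?_⟩
    rw [← append_assoc, ← replicate_add, Nat.sub_add_cancel (by simpa using h), append_nil]
  | cons b w ih =>
    cases b with
    | false =>
      obtain ⟨u, v, huv⟩ := ih (a + 1) (by rw [balance_cons_false] at h; omega)
      exact ⟨u, v, by simpa [replicate_succ'] using huv⟩
    | true =>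
      by_cases hka : k ≤ a
      · refine ⟨replicate (a - k) false, w ++ [true], ?_⟩
        rw [← append_assoc, ← replicate_add, Nat.sub_add_cancel hka]
        simp
      · obtain ⟨u, v, huv⟩ := ih 0 (by rw [balance_cons_true] at h; omega)
        exact ⟨replicate a false ++ true :: u, v, by simpa using huv⟩

theorem exists_isRotated_replicate_false_append_true {l : List Bool} (hl : true ∈ l)
    (h : 0 ≤ balance k l) : ∃ t, l ~r replicate k false ++ true :: t := by
  obtain ⟨x, y, rfl⟩ := append_of_mem hl
  obtain ⟨u, v, huv⟩ := exists_replicate_false_append_eq_append_block (k := k) 0 (y ++ x)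
    (by simp only [balance_append, balance_cons_true] at h ⊢; omega)
  refine ⟨v ++ u, ?_⟩
  have h₁ : x ++ true :: y ~r replicate 0 false ++ (y ++ x) ++ [true] := by
    simpa using isRotated_append (l := x ++ [true]) (l' := y)
  have h₂ : u ++ (replicate k false ++ true :: v) ~r replicate k false ++ true :: (v ++ u) := by
    simpa using isRotated_append (l := u) (l' := replicate k false ++ true :: v)
  rw [huv] at h₁
  exact h₁.trans h₂

theorem ncard_rotationIndices_dominating (l : List Bool) (h : k * l.count true ≤ l.count false) :
    (rotationIndices (Dominating k) l).ncard = l.count false - k * l.count true := by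
  induction hn : l.count true generalizing l with
  | zero =>
    have hl : true ∉ l := count_eq_zero.mp hn
    have hall : rotationIndices (Dominating k) l = Set.Iio l.length := by
      ext j
      simp [rotationIndices, dominating_of_true_not_mem (mt mem_rotate.mp hl)]
    rw [hall, Set.ncard_Iio_nat, ← count_false_add_count_true l, hn]
    simp
  | succ n ih =>
    have hl : true ∈ l := count_pos_iff.mp (by omega)
    obtain ⟨t, ht⟩ := exists_isRotated_replicate_false_append_true hl (balance_nonneg_iff.mpr h)
    have hf : l.count false = t.count false + k := by
      simpa [count_replicate, Nat.add_comm] using ht.perm.count_eq false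
    have htr : l.count true = t.count true + 1 := by
      simpa [count_replicate] using ht.perm.count_eq true
    have htn : t.count true = n := by omega
    rw [hn, mul_add, mul_one] at h
    rw [ht.ncard_rotationIndices_eq, rotationIndices_dominating_replicate_append,
      Set.ncard_image_of_injective _ (add_left_injective _), ih t (by rw [htn]; omega) htn]
    rw [mul_add, mul_one]
    omega

end Dominating

theorem cycle_lemma_general (k p q : ℕ) (hpq : k * q ≤ p)
    (b : List Bool) (hlen : b.length = p + q)
    (h0 : b.count false = p) (h1 : b.count true = q) :
    {j : ℕ | j < p + q ∧ Dominating k (b.rotate j)}.ncard = p - k * q := by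
  subst h0 h1
  rw [← hlen]
  exact ncard_rotationIndices_dominating b hpq

/-- Cycle lemma (Dershowitz–Zaks): if `b` is a binary word with `p` letters 0 and `q`
letters 1, where `p ≥ k·q` and `k ≥ 1`, then exactly `p − k·q` of its `p+q` cyclic
rotations are `k`-dominating. -/
theorem cycle_lemma (k p q : ℕ) (hk : 1 ≤ k) (hpq : k * q ≤ p)
    (b : List Bool) (hlen : b.length = p + q)
    (h0 : b.count false = p) (h1 : b.count true = q) :
    {j : ℕ | j < p + q ∧ Dominating k (b.rotate j)}.ncard = p - k * q :=
  cycle_lemma_general k p q hpq b hlen h0 h1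
end

section
/- For every ρ ∈ ℕ and every τ ∈ ℕ with τ ≥ 1, the number of 3-dominating binary words of length 4ρ+τ with exactly 3ρ+τ letters 0 and ρ letters 1 satisfies (4ρ+τ) · |𝒟_{3,3ρ+τ,ρ}| = τ · C(4ρ+τ, ρ), where C denotes the binomial coefficient; equivalently |𝒟_{3,3ρ+τ,ρ}| = (τ/(4ρ+τ)) · C(4ρ+τ, ρ). -/
/-- `𝒟_{k,p,q}` : `k`-dominating binary words with `p` letters 0 and `q` letters 1. -/
def DSet (k p q : ℕ) : Set (List Bool) :=
  {w | w.length = p + q ∧ w.count false = p ∧ w.count true = q ∧ Dominating k w}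

/-!
Deleting the last letter of a word in `𝒟_{k,p+1,q+1}` leaves a word of `𝒟_{k,p+1,q}` or of
`𝒟_{k,p,q+1}`, and as long as `k(q+1) < p+1` every such word extends back. So the cardinalities
satisfy Pascal's recurrence away from the boundary, where `𝒟_{k,p,0}` is a singleton and
`𝒟_{k,kq,q}` is empty. The ballot numbers `τ/((k+1)ρ+τ) · C((k+1)ρ+τ, ρ)` satisfy the same
recurrence and boundary values, which gives the formula for every `k`.
-/
theorem dominating_append_singleton {k : ℕ} {w : List Bool} {b : Bool} :
    Dominating k (w ++ [b]) ↔
      Dominating k w ∧ k * (w ++ [b]).count true < (w ++ [b]).count false := by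
  simp only [Dominating, Finset.mem_Icc, List.length_append, List.length_singleton]
  have htake : (w ++ [b]).take (w.length + 1) = w ++ [b] := List.take_of_length_le (by simp)
  constructor
  · intro h
    refine ⟨fun i hi => ?_, ?_⟩
    · simpa [List.take_append_of_le_length hi.2] using h i ⟨hi.1, by omega⟩
    · simpa only [htake] using h (w.length + 1) ⟨by omega, le_rfl⟩
  · rintro ⟨hw, hlast⟩ i ⟨hi₁, hi₂⟩
    rcases hi₂.lt_or_eq with hlt | rfl
    · simpa [List.take_append_of_le_length (Nat.le_of_lt_succ hlt)] using hw i ⟨hi₁, by omega⟩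
    · simpa only [htake] using hlast

theorem mem_dSet_append_true {k p q : ℕ} {w : List Bool} :
    w ++ [true] ∈ DSet k p (q + 1) ↔ w ∈ DSet k p q ∧ k * (q + 1) < p := by
  have hfalse : (w ++ [true]).count false = w.count false := by simp
  have htrue : (w ++ [true]).count true = w.count true + 1 := by simp
  simp only [DSet, Set.mem_ofPred_eq, dominating_append_singleton, hfalse, htrue,
    List.length_append, List.length_singleton]
  constructor
  · rintro ⟨hlen, rfl, hq, hw, hlast⟩
    exact ⟨⟨by omega, rfl, by omega, hw⟩, by rwa [← hq]⟩
  · rintro ⟨⟨hlen, rfl, rfl, hw⟩, hlt⟩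
    exact ⟨by omega, rfl, rfl, hw, hlt⟩

theorem mem_dSet_append_false {k p q : ℕ} {w : List Bool} :
    w ++ [false] ∈ DSet k (p + 1) q ↔ w ∈ DSet k p q ∧ k * q < p + 1 := by
  have hfalse : (w ++ [false]).count false = w.count false + 1 := by simp
  have htrue : (w ++ [false]).count true = w.count true := by simp
  simp only [DSet, Set.mem_ofPred_eq, dominating_append_singleton, hfalse, htrue,
    List.length_append, List.length_singleton]
  constructor
  · rintro ⟨hlen, hp, rfl, hw, hlast⟩
    exact ⟨⟨by omega, by omega, rfl, hw⟩, by rwa [← hp]⟩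
  · rintro ⟨⟨hlen, rfl, rfl, hw⟩, hlt⟩
    exact ⟨by omega, rfl, rfl, hw, hlt⟩

theorem dSet_finite (k p q : ℕ) : (DSet k p q).Finite :=
  (List.finite_length_eq Bool (p + q)).subset fun _ hw => hw.1

theorem dSet_zero_right (k p : ℕ) : DSet k p 0 = {List.replicate p false} := by
  ext w
  simp only [DSet, Set.mem_ofPred_eq, Set.mem_singleton_iff, add_zero]
  constructor
  · rintro ⟨hlen, hp, -, -⟩
    subst hlen
    exact List.eq_replicate_iff.2 ⟨rfl, fun b hb => (List.count_eq_length.1 hp b hb).symm⟩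
  · rintro rfl
    refine ⟨by simp, List.count_replicate_self, by simp [List.count_replicate], fun i hi => ?_⟩
    simp only [Finset.mem_Icc, List.length_replicate] at hi
    rw [List.take_replicate, List.count_replicate_self, List.count_replicate, if_neg (by decide),
      mul_zero]
    omega

theorem dSet_eq_empty {k p q : ℕ} (hq : 0 < q) (hp : p ≤ k * q) : DSet k p q = ∅ := by
  refine Set.eq_empty_of_forall_notMem fun w ⟨hlen, hpw, hqw, hw⟩ => ?_
  have := hw w.length (Finset.mem_Icc.2 ⟨by omega, le_rfl⟩)
  rw [List.take_length, hpw, hqw] at this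
  omega

theorem dSet_succ_succ {k p q : ℕ} (h : k * (q + 1) < p + 1) :
    DSet k (p + 1) (q + 1) =
      (· ++ [true]) '' DSet k (p + 1) q ∪ (· ++ [false]) '' DSet k p (q + 1) := by
  ext w
  constructor
  · intro hw
    rcases List.eq_nil_or_concat' w with rfl | ⟨u, b, rfl⟩
    · simpa [DSet] using hw.1
    · cases b
      · exact Or.inr ⟨u, (mem_dSet_append_false.1 hw).1, rfl⟩
      · exact Or.inl ⟨u, (mem_dSet_append_true.1 hw).1, rfl⟩
  · rintro (⟨u, hu, rfl⟩ | ⟨u, hu, rfl⟩)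
    · exact mem_dSet_append_true.2 ⟨hu, h⟩
    · exact mem_dSet_append_false.2 ⟨hu, by omega⟩

theorem card_dSet_succ_succ {k p q : ℕ} (h : k * (q + 1) < p + 1) :
    Nat.card (DSet k (p + 1) (q + 1)) =
      Nat.card (DSet k (p + 1) q) + Nat.card (DSet k p (q + 1)) := by
  simp only [Nat.card_coe_set_eq]
  rw [dSet_succ_succ h,
    Set.ncard_union_eq ?_ ((dSet_finite ..).image _) ((dSet_finite ..).image _),
    Set.ncard_image_of_injective _ (List.append_left_injective _),
    Set.ncard_image_of_injective _ (List.append_left_injective _)]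
  rw [Set.disjoint_left]
  rintro _ ⟨u, -, rfl⟩ ⟨v, -, huv⟩
  simpa using congrArg List.getLast? huv

theorem mul_card_dSet (k ρ τ : ℕ) :
    ((k + 1) * ρ + τ) * Nat.card (DSet k (k * ρ + τ) ρ) = τ * ((k + 1) * ρ + τ).choose ρ := by
  induction ρ generalizing τ with
  | zero => simp [dSet_zero_right]
  | succ r ihr =>
    induction τ with
    | zero => simp [dSet_eq_empty (Nat.succ_pos r) le_rfl]
    | succ t iht =>
      have ih₁ := ihr (t + k + 1)
      rw [show k * r + (t + k + 1) = k * (r + 1) + t + 1 by ring,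
        show (k + 1) * r + (t + k + 1) = (k + 1) * (r + 1) + t by ring] at ih₁
      have hpascal := Nat.choose_succ_right_eq ((k + 1) * (r + 1) + t) r
      rw [Nat.sub_eq_of_eq_add (show (k + 1) * (r + 1) + t = k * (r + 1) + t + 1 + r by ring)]
        at hpascal
      rw [show (k + 1) * (r + 1) + (t + 1) = (k + 1) * (r + 1) + t + 1 by ring,
        Nat.choose_succ_succ, show k * (r + 1) + (t + 1) = k * (r + 1) + t + 1 by ring,
        card_dSet_succ_succ (by omega)]
      apply Nat.eq_of_mul_eq_mul_left (show 0 < (k + 1) * (r + 1) + t by positivity)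
      zify at ih₁ iht hpascal ⊢
      linear_combination ((k + 1) * (r + 1) + t + 1 : ℤ) * (ih₁ + iht) - (k + 1 : ℤ) * hpascal

theorem card_dSet_general (ρ τ : ℕ) :
    (4 * ρ + τ) * Nat.card ↥(DSet 3 (3 * ρ + τ) ρ) = τ * Nat.choose (4 * ρ + τ) ρ :=
  mul_card_dSet 3 ρ τ

/-- The number of 3-dominating binary words of length `4ρ+τ` with `3ρ+τ` letters 0
and `ρ` letters 1 satisfies `(4ρ+τ) · |𝒟_{3,3ρ+τ,ρ}| = τ · C(4ρ+τ, ρ)`. -/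
theorem card_dSet (ρ τ : ℕ) (hτ : 1 ≤ τ) :
    (4 * ρ + τ) * Nat.card ↥(DSet 3 (3 * ρ + τ) ρ) = τ * Nat.choose (4 * ρ + τ) ρ :=
  card_dSet_general ρ τ
end

section
/- Let ρ > 0, σ > 0 and γ ∈ ℝ. Set L_n = 2⌊√(2n)·σ⌋ + ⌊(8n/9)^{1/4}·γ⌋ and m_n = ⌊nρ⌋ (both are positive for all sufficiently large n). Then, as n → ∞, the ratio (∏_{p=1}^{L_n} (1 + p/(4 m_n))) / (∏_{p=1}^{L_n} (1 + p/(3 m_n))) converges to exp(−σ²/(3ρ)). -/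
open Filter

/-- `L_n = 2⌊√(2n)·σ⌋ + ⌊(8n/9)^{1/4}·γ⌋`. -/
noncomputable def Lseq (σ γ : ℝ) (n : ℕ) : ℤ :=
  2 * ⌊Real.sqrt (2 * (n : ℝ)) * σ⌋ + ⌊(8 * (n : ℝ) / 9) ^ ((1 : ℝ) / 4) * γ⌋

/-- `m_n = ⌊nρ⌋`. -/
noncomputable def mseq (ρ : ℝ) (n : ℕ) : ℤ := ⌊(n : ℝ) * ρ⌋

/-!
Since `log (1 + x) = x + O(x²)` for `x ≥ 0`, summing over `k ≤ ℓ` gives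
`∏_{k=1}^{ℓ} (1 + k/c) = exp (ℓ²/(2c) + O(ℓ/c + ℓ³/c²))`. With `ℓ ~ 2√2 σ √n` and `c ~ κ n`
the error is `O(n^{-1/2})`, so numerator and denominator converge separately, to
`exp (σ²/ρ)` (`κ = 4ρ`) and `exp (4σ²/(3ρ))` (`κ = 3ρ`).
-/

open Finset Topology Real

lemma abs_log_one_add_sub_self_le_sq {x : ℝ} (hx : 0 ≤ x) : |log (1 + x) - x| ≤ x ^ 2 := by
  have hpos : 0 < 1 + x := by linarith
  have hupper : log (1 + x) ≤ x := by linarith [log_le_sub_one_of_pos hpos]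
  have hlower : x - x ^ 2 ≤ log (1 + x) := calc
    x - x ^ 2 ≤ x / (1 + x) := by rw [le_div_iff₀ hpos]; nlinarith [pow_nonneg hx 3]
    _ = 1 - (1 + x)⁻¹ := by field_simp; ring
    _ ≤ log (1 + x) := one_sub_inv_le_log_of_pos hpos
  rw [abs_le]; constructor <;> linarith

lemma sum_Icc_one_natCast (ℓ : ℕ) : ∑ k ∈ Icc 1 ℓ, (k : ℝ) = ℓ * (ℓ + 1) / 2 := by
  induction ℓ with
  | zero => simp
  | succ ℓ ih => rw [sum_Icc_succ_top (by omega), ih]; push_cast; ring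

lemma prod_Icc_one_int_eq_prod_Icc_toNat {M : Type*} [CommMonoid M] (f : ℤ → M) (L : ℤ) :
    ∏ p ∈ Icc (1 : ℤ) L, f p = ∏ k ∈ Icc 1 L.toNat, f k := by
  symm
  refine prod_nbij (fun k : ℕ => (k : ℤ)) ?_ ?_ ?_ (fun _ _ => rfl)
  · intro k hk; simp only [mem_Icc] at hk ⊢; omega
  · intro a _ b _ h; exact Nat.cast_injective h
  · intro p hp; simp only [coe_Icc, Set.mem_Icc, Set.mem_image] at hp ⊢
    exact ⟨p.toNat, by omega, by omega⟩

lemma abs_sum_log_one_add_div_sub_le {c : ℝ} (hc : 0 ≤ c) (ℓ : ℕ) :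
    |∑ k ∈ Icc 1 ℓ, log (1 + k / c) - ℓ * (ℓ + 1) / (2 * c)| ≤ ℓ ^ 3 / c ^ 2 := by
  have hlin : ∑ k ∈ Icc 1 ℓ, (k : ℝ) / c = ℓ * (ℓ + 1) / (2 * c) := by
    rw [← sum_div, sum_Icc_one_natCast, div_div]
  calc |∑ k ∈ Icc 1 ℓ, log (1 + k / c) - ℓ * (ℓ + 1) / (2 * c)|
      = |∑ k ∈ Icc 1 ℓ, (log (1 + k / c) - k / c)| := by rw [sum_sub_distrib, hlin]
    _ ≤ ∑ k ∈ Icc 1 ℓ, |log (1 + k / c) - k / c| := abs_sum_le_sum_abs _ _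
    _ ≤ ∑ _k ∈ Icc 1 ℓ, ((ℓ : ℝ) / c) ^ 2 := by
      refine sum_le_sum fun k hk => ?_
      have hkℓ : (k : ℝ) ≤ ℓ := by exact_mod_cast (mem_Icc.mp hk).2
      refine (abs_log_one_add_sub_self_le_sq (by positivity)).trans ?_
      gcongr
    _ = ℓ ^ 3 / c ^ 2 := by
      simp only [sum_const, Nat.card_Icc, add_tsub_cancel_right, nsmul_eq_mul]; ring

lemma tendsto_floor_div_of_tendsto_div {ι : Type*} {l : Filter ι} {f g : ι → ℝ} {a : ℝ}
    (hg : Tendsto g l atTop) (h : Tendsto (fun i => f i / g i) l (𝓝 a)) :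
    Tendsto (fun i => (⌊f i⌋ : ℝ) / g i) l (𝓝 a) := by
  have hfract : Tendsto (fun i => Int.fract (f i) / g i) l (𝓝 0) := by
    have hg_pos := hg.eventually_gt_atTop 0
    refine squeeze_zero' ?_ ?_ hg.inv_tendsto_atTop
    · filter_upwards [hg_pos] with i hi
      exact div_nonneg (Int.fract_nonneg _) hi.le
    · filter_upwards [hg_pos] with i hi
      rw [inv_eq_one_div]
      exact div_le_div_of_nonneg_right (Int.fract_lt_one _).le hi.le
  simpa using (h.sub hfract).congr fun i => by rw [← Int.self_sub_floor]; ring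

lemma tendsto_prod_one_add_div {ι : Type*} {l : Filter ι} {ℓ : ι → ℕ} {c : ι → ℝ} {a : ℝ}
    (hc : ∀ i, 0 ≤ c i) (h2 : Tendsto (fun i => (ℓ i : ℝ) ^ 2 / c i) l (𝓝 a))
    (h1 : Tendsto (fun i => (ℓ i : ℝ) / c i) l (𝓝 0))
    (h3 : Tendsto (fun i => (ℓ i : ℝ) ^ 3 / c i ^ 2) l (𝓝 0)) :
    Tendsto (fun i => ∏ k ∈ Icc 1 (ℓ i), (1 + (k : ℝ) / c i)) l (𝓝 (exp (a / 2))) := by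
  have hgauss : Tendsto (fun i => (ℓ i : ℝ) * (ℓ i + 1) / (2 * c i)) l (𝓝 (a / 2)) := by
    simpa using ((h2.add h1).div_const 2).congr fun i => by ring
  have herr : Tendsto (fun i => ∑ k ∈ Icc 1 (ℓ i), log (1 + k / c i)
      - ℓ i * (ℓ i + 1) / (2 * c i)) l (𝓝 0) :=
    squeeze_zero_norm (fun i => (abs_sum_log_one_add_div_sub_le (hc i) (ℓ i))) h3
  have hsum : Tendsto (fun i => ∑ k ∈ Icc 1 (ℓ i), log (1 + k / c i)) l (𝓝 (a / 2)) := by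
    simpa using herr.add hgauss
  refine ((continuous_exp.tendsto _).comp hsum).congr fun i => ?_
  rw [Function.comp_apply, exp_sum]
  exact prod_congr rfl fun k _ => exp_log (by have := hc i; positivity)

lemma tendsto_prod_one_add_div_of_tendsto_div_sqrt {ℓ : ℕ → ℕ} {c : ℕ → ℝ} {a b : ℝ}
    (hc : ∀ n, 0 ≤ c n) (hℓ : Tendsto (fun n => (ℓ n : ℝ) / √n) atTop (𝓝 a))
    (hcn : Tendsto (fun n => c n / n) atTop (𝓝 b)) (hb : 0 < b) :
    Tendsto (fun n => ∏ k ∈ Icc 1 (ℓ n), (1 + (k : ℝ) / c n)) atTop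
      (𝓝 (exp (a ^ 2 / b / 2))) := by
  have hs : Tendsto (fun n : ℕ => (√n)⁻¹) atTop (𝓝 0) :=
    (tendsto_sqrt_atTop.comp tendsto_natCast_atTop_atTop).inv_tendsto_atTop
  have hpos : ∀ᶠ n : ℕ in atTop, 0 < (n : ℝ) ∧ 0 < c n := by
    filter_upwards [eventually_gt_atTop 0, hcn.eventually_const_lt hb] with n hn hcn
    have hn : 0 < (n : ℝ) := by exact_mod_cast hn
    exact ⟨hn, (div_pos_iff_of_pos_right hn).mp hcn⟩
  have hrescale : ∀ᶠ n : ℕ in atTop,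
      ((ℓ n : ℝ) / √n) ^ 2 / (c n / n) = ℓ n ^ 2 / c n ∧
      (ℓ n : ℝ) / √n / (c n / n) * (√n)⁻¹ = ℓ n / c n ∧
      ((ℓ n : ℝ) / √n) ^ 3 / (c n / n) ^ 2 * (√n)⁻¹ = ℓ n ^ 3 / c n ^ 2 := by
    filter_upwards [hpos] with n ⟨hn, hcpos⟩
    have hsq : (n : ℝ) = √n ^ 2 := (sq_sqrt hn.le).symm
    have hsqrt : 0 < √(n : ℝ) := sqrt_pos.mpr hn
    set s := √(n : ℝ)
    rw [hsq]
    refine ⟨?_, ?_, ?_⟩ <;> field_simp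
  have h2 : Tendsto (fun n => (ℓ n : ℝ) ^ 2 / c n) atTop (𝓝 (a ^ 2 / b)) :=
    ((hℓ.pow 2).div hcn hb.ne').congr' (hrescale.mono fun _ h => h.1)
  have h1 : Tendsto (fun n => (ℓ n : ℝ) / c n) atTop (𝓝 0) := by
    simpa using ((hℓ.div hcn hb.ne').mul hs).congr' (hrescale.mono fun _ h => h.2.1)
  have h3 : Tendsto (fun n => (ℓ n : ℝ) ^ 3 / c n ^ 2) atTop (𝓝 0) := by
    simpa using (((hℓ.pow 3).div (hcn.pow 2) (by positivity)).mul hs).congr'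
      (hrescale.mono fun _ h => h.2.2)
  exact tendsto_prod_one_add_div hc h2 h1 h3

lemma tendsto_toNat_div_of_tendsto_div {ι : Type*} {l : Filter ι} {z : ι → ℤ} {g : ι → ℝ}
    {a : ℝ} (hg : ∀ i, 0 ≤ g i) (ha : 0 < a) (h : Tendsto (fun i => (z i : ℝ) / g i) l (𝓝 a)) :
    Tendsto (fun i => ((z i).toNat : ℝ) / g i) l (𝓝 a) := by
  refine h.congr' ?_
  filter_upwards [h.eventually_const_lt ha] with i hi
  have hz : 0 ≤ z i := by
    by_contra! hneg
    have : (z i : ℝ) / g i ≤ 0 := div_nonpos_of_nonpos_of_nonneg (by exact_mod_cast hneg.le) (hg i)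
    linarith
  rw [← Int.cast_natCast, Int.toNat_of_nonneg hz]

lemma tendsto_mseq_div (ρ : ℝ) : Tendsto (fun n => (mseq ρ n : ℝ) / n) atTop (𝓝 ρ) := by
  refine tendsto_floor_div_of_tendsto_div tendsto_natCast_atTop_atTop
    (tendsto_const_nhds.congr' ?_)
  filter_upwards [eventually_ne_atTop 0] with n hn
  field_simp

lemma tendsto_Lseq_div_sqrt (σ γ : ℝ) :
    Tendsto (fun n => (Lseq σ γ n : ℝ) / √n) atTop (𝓝 (2 * √2 * σ)) := by
  have hsqrt : Tendsto (fun n : ℕ => √(n : ℝ)) atTop atTop :=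
    tendsto_sqrt_atTop.comp tendsto_natCast_atTop_atTop
  have hleading : Tendsto (fun n : ℕ => (⌊√(2 * (n : ℝ)) * σ⌋ : ℝ) / √n) atTop (𝓝 (√2 * σ)) := by
    refine tendsto_floor_div_of_tendsto_div hsqrt (tendsto_const_nhds.congr' ?_)
    filter_upwards [eventually_gt_atTop 0] with n hn
    have : 0 < √(n : ℝ) := sqrt_pos.mpr (by exact_mod_cast hn)
    rw [sqrt_mul zero_le_two]
    field_simp
  have hquartic : Tendsto (fun n : ℕ => (⌊(8 * (n : ℝ) / 9) ^ ((1 : ℝ) / 4) * γ⌋ : ℝ) / √n)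
      atTop (𝓝 0) := by
    refine tendsto_floor_div_of_tendsto_div hsqrt ?_
    have hdecay : Tendsto (fun n : ℕ => (n : ℝ) ^ (-(1 / 4 : ℝ))) atTop (𝓝 0) :=
      (tendsto_rpow_neg_atTop (by norm_num)).comp tendsto_natCast_atTop_atTop
    rw [← mul_zero ((8 / 9 : ℝ) ^ ((1 : ℝ) / 4) * γ)]
    refine (hdecay.const_mul _).congr' ?_
    filter_upwards [eventually_gt_atTop 0] with n hn
    have hn : (0 : ℝ) < n := by exact_mod_cast hn
    rw [show 8 * (n : ℝ) / 9 = 8 / 9 * n by ring, mul_rpow (by norm_num) hn.le, sqrt_eq_rpow,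
      show -(1 / 4 : ℝ) = 1 / 4 - 1 / 2 by norm_num, rpow_sub hn]
    ring
  simpa [Lseq, mul_assoc, add_div, mul_div_assoc] using (hleading.const_mul 2).add hquartic

/-- As `n → ∞`, the ratio
`(∏_{p=1}^{L_n} (1 + p/(4 m_n))) / (∏_{p=1}^{L_n} (1 + p/(3 m_n)))`
converges to `exp(−σ²/(3ρ))`. -/
theorem tendsto_ratio_prod (ρ σ γ : ℝ) (hρ : 0 < ρ) (hσ : 0 < σ) :
    Tendsto
      (fun n : ℕ =>
        (∏ p ∈ Finset.Icc (1 : ℤ) (Lseq σ γ n),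
            (1 + (p : ℝ) / (4 * (mseq ρ n : ℝ)))) /
        (∏ p ∈ Finset.Icc (1 : ℤ) (Lseq σ γ n),
            (1 + (p : ℝ) / (3 * (mseq ρ n : ℝ)))))
      atTop (nhds (Real.exp (-σ ^ 2 / (3 * ρ)))) := by
  have hm_nonneg (n : ℕ) : (0 : ℝ) ≤ mseq ρ n := by
    exact_mod_cast Int.floor_nonneg.mpr (by positivity)
  have hℓ := tendsto_toNat_div_of_tendsto_div (fun _ => sqrt_nonneg _) (by positivity)
    (tendsto_Lseq_div_sqrt σ γ)
  have hm := tendsto_mseq_div ρ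
  have hprod (k : ℝ) (hk : 0 < k) := tendsto_prod_one_add_div_of_tendsto_div_sqrt
    (fun n => mul_nonneg hk.le (hm_nonneg n)) hℓ
    (by simpa only [mul_div_assoc] using hm.const_mul k) (mul_pos hk hρ)
  have hexp : exp ((2 * √2 * σ) ^ 2 / (4 * ρ) / 2) / exp ((2 * √2 * σ) ^ 2 / (3 * ρ) / 2)
      = exp (-σ ^ 2 / (3 * ρ)) := by
    rw [← exp_sub, mul_pow, mul_pow, sq_sqrt zero_le_two]
    congr 1
    field_simp
    ring
  rw [← hexp]
  refine ((hprod 4 four_pos).div (hprod 3 three_pos) (exp_pos _).ne').congr fun n => ?_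
  simp only [Pi.div_apply, prod_Icc_one_int_eq_prod_Icc_toNat, Int.cast_natCast]
end

section
/- Let σ ∈ ℕ and γ ∈ ℤ with |γ| ≤ σ, and let M ∈ ℳ_σ^γ be a Motzkin path. Then the extension M̃ = (M̃_i)_{0 ≤ i ≤ 2σ+γ} of M satisfies: M̃_0 = 0, M̃_{2σ+γ} = γ, and M̃_{i+1} − M̃_i ∈ {−1, +1} for every 0 ≤ i < 2σ+γ (in particular M̃ ∈ ℳ_{2σ+γ}^γ); moreover, for every t ∈ {0, 1, ..., σ} one has 0 ≤ 2t + M_t ≤ 2σ+γ and M̃_{2t + M_t} = M_t. -/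
/-- The extension of a Motzkin path, given as the list of its steps: each step `0`
is replaced by the two steps `+1, −1` (inserting the value `M_i + 1`), each step
`+1` is replaced by the three steps `+1, +1, −1` (inserting `M_i + 1, M_i + 2`),
and each step `−1` is kept. -/
def extendSteps (l : List ℤ) : List ℤ :=
  l.flatMap fun d => if d = 0 then [1, -1] else if d = 1 then [1, 1, -1] else [-1]

/-- The list of steps of the path `M` up to time `σ`. -/
def stepsOf (σ : ℕ) (M : ℕ → ℤ) : List ℤ :=
  (List.range σ).map fun t => M (t + 1) - M t

/-- The extension `M̃` of a Motzkin path `M` of length `σ`, as a function: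
`M̃_i` is the sum of the first `i` extended steps. -/
def extPath (σ : ℕ) (M : ℕ → ℤ) (i : ℕ) : ℤ :=
  ((extendSteps (stepsOf σ M)).take i).sum


/-! Each Motzkin step `d ∈ {−1, 0, 1}` is replaced by a block of `±1` steps of length `2 + d`
and sum `d`. Hence the extension of the first `t` steps of `M` is a prefix of the extension
of all `σ` steps, of length `2t + M_t` and sum `M_t`, which gives both the endpoint and the
values `M̃_{2t + M_t} = M_t`. -/

def IsMotzkinStep (d : ℤ) : Prop := d = -1 ∨ d = 0 ∨ d = 1

theorem extendSteps_cons (d : ℤ) (l : List ℤ) :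
    extendSteps (d :: l) =
      (if d = 0 then [1, -1] else if d = 1 then [1, 1, -1] else [-1]) ++ extendSteps l :=
  List.flatMap_cons

theorem List.IsPrefix.extendSteps {l₁ l₂ : List ℤ} (h : l₁ <+: l₂) :
    _root_.extendSteps l₁ <+: _root_.extendSteps l₂ :=
  h.flatMap _

theorem eq_neg_one_or_eq_one_of_mem_extendSteps {l : List ℤ} {x : ℤ}
    (hx : x ∈ extendSteps l) : x = -1 ∨ x = 1 := by
  obtain ⟨d, -, hxd⟩ := List.mem_flatMap.mp hx
  split_ifs at hxd <;>
    simp only [List.mem_cons, List.not_mem_nil, or_false] at hxd <;> omega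

theorem sum_extendSteps {l : List ℤ} (hl : ∀ d ∈ l, IsMotzkinStep d) :
    (extendSteps l).sum = l.sum := by
  induction l with
  | nil => rfl
  | cons d l ih =>
    rw [extendSteps_cons, List.sum_append, ih fun e he => hl e (List.mem_cons_of_mem d he),
      List.sum_cons]
    rcases hl d List.mem_cons_self with rfl | rfl | rfl <;> simp

theorem length_extendSteps {l : List ℤ} (hl : ∀ d ∈ l, IsMotzkinStep d) :
    ((extendSteps l).length : ℤ) = 2 * l.length + l.sum := by
  induction l with
  | nil => rfl
  | cons d l ih =>
    rw [extendSteps_cons, List.length_append, Nat.cast_add,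
      ih fun e he => hl e (List.mem_cons_of_mem d he), List.length_cons, List.sum_cons]
    rcases hl d List.mem_cons_self with rfl | rfl | rfl <;> grind

section stepsOf

variable (M : ℕ → ℤ)

theorem length_stepsOf (σ : ℕ) : (stepsOf σ M).length = σ := by
  simp [stepsOf]

theorem sum_stepsOf (σ : ℕ) : (stepsOf σ M).sum = M σ - M 0 := by
  rw [stepsOf, ← List.sum_toFinset _ List.nodup_range, List.toFinset_range,
    Finset.sum_range_sub]

theorem stepsOf_prefix {t σ : ℕ} (h : t ≤ σ) : stepsOf t M <+: stepsOf σ M := by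
  obtain ⟨k, rfl⟩ := Nat.exists_eq_add_of_le h
  rw [stepsOf, stepsOf, List.range_add, List.map_append]
  exact List.prefix_append _ _

theorem isMotzkinStep_of_mem_stepsOf {σ : ℕ}
    (hstep : ∀ i < σ, IsMotzkinStep (M (i + 1) - M i)) :
    ∀ d ∈ stepsOf σ M, IsMotzkinStep d := by
  simp only [stepsOf, List.mem_map, List.mem_range]
  rintro _ ⟨i, hi, rfl⟩
  exact hstep i hi

theorem extPath_length_extendSteps_stepsOf {t σ : ℕ} (h : t ≤ σ) :
    extPath σ M (extendSteps (stepsOf t M)).length = (extendSteps (stepsOf t M)).sum := by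
  rw [extPath, ← List.prefix_iff_eq_take.mp (stepsOf_prefix M h).extendSteps]

theorem extPath_succ_sub {σ i : ℕ} (hi : i < (extendSteps (stepsOf σ M)).length) :
    extPath σ M (i + 1) - extPath σ M i = (extendSteps (stepsOf σ M))[i] := by
  rw [extPath, extPath, List.sum_take_succ _ _ hi, add_sub_cancel_left]

end stepsOf

theorem extPath_spec_general (σ : ℕ) (γ : ℤ) (M : ℕ → ℤ)
    (h0 : M 0 = 0) (hend : M σ = γ)
    (hstep : ∀ i < σ,
      M (i + 1) - M i = -1 ∨ M (i + 1) - M i = 0 ∨ M (i + 1) - M i = 1) :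
    (extendSteps (stepsOf σ M)).length = (2 * (σ : ℤ) + γ).toNat ∧
    extPath σ M 0 = 0 ∧
    extPath σ M (2 * (σ : ℤ) + γ).toNat = γ ∧
    (∀ i : ℕ, (i : ℤ) < 2 * (σ : ℤ) + γ →
      extPath σ M (i + 1) - extPath σ M i = -1 ∨
        extPath σ M (i + 1) - extPath σ M i = 1) ∧
    (∀ t : ℕ, t ≤ σ →
      0 ≤ 2 * (t : ℤ) + M t ∧ 2 * (t : ℤ) + M t ≤ 2 * (σ : ℤ) + γ ∧
        extPath σ M (2 * (t : ℤ) + M t).toNat = M t) := by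
  have hsteps {t : ℕ} (ht : t ≤ σ) : ∀ d ∈ stepsOf t M, IsMotzkinStep d :=
    isMotzkinStep_of_mem_stepsOf M fun i hi => hstep i (by omega)
  have hlen {t : ℕ} (ht : t ≤ σ) :
      ((extendSteps (stepsOf t M)).length : ℤ) = 2 * t + M t := by
    rw [length_extendSteps (hsteps ht), length_stepsOf, sum_stepsOf, h0, sub_zero]
  have hval {t : ℕ} (ht : t ≤ σ) : extPath σ M (extendSteps (stepsOf t M)).length = M t := by
    rw [extPath_length_extendSteps_stepsOf M ht, sum_extendSteps (hsteps ht), sum_stepsOf, h0,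
      sub_zero]
  have hlenσ : ((extendSteps (stepsOf σ M)).length : ℤ) = 2 * σ + γ := hend ▸ hlen le_rfl
  refine ⟨by omega, rfl, ?_, fun i hi => ?_, fun t ht => ?_⟩
  · rw [show (2 * (σ : ℤ) + γ).toNat = (extendSteps (stepsOf σ M)).length by omega,
      hval le_rfl, hend]
  · have hi' : i < (extendSteps (stepsOf σ M)).length := by omega
    rw [extPath_succ_sub M hi']
    exact eq_neg_one_or_eq_one_of_mem_extendSteps (List.getElem_mem hi')
  · have hprefix := ((stepsOf_prefix M ht).extendSteps).length_le
    have hlent := hlen ht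
    refine ⟨by omega, by omega, ?_⟩
    rw [show (2 * (t : ℤ) + M t).toNat = (extendSteps (stepsOf t M)).length by omega, hval ht]

/-- If `M ∈ ℳ_σ^γ` is a Motzkin path, then its extension `M̃` has `2σ+γ+1` entries,
satisfies `M̃_0 = 0`, `M̃_{2σ+γ} = γ`, has increments in `{−1, +1}` (so
`M̃ ∈ ℳ_{2σ+γ}^γ`), and for every `t ∈ {0, …, σ}` one has `0 ≤ 2t + M_t ≤ 2σ+γ`
and `M̃_{2t + M_t} = M_t`. -/
theorem extPath_spec (σ : ℕ) (γ : ℤ) (hγ : |γ| ≤ (σ : ℤ)) (M : ℕ → ℤ)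
    (h0 : M 0 = 0) (hend : M σ = γ)
    (hstep : ∀ i < σ,
      M (i + 1) - M i = -1 ∨ M (i + 1) - M i = 0 ∨ M (i + 1) - M i = 1) :
    (extendSteps (stepsOf σ M)).length = (2 * (σ : ℤ) + γ).toNat ∧
    extPath σ M 0 = 0 ∧
    extPath σ M (2 * (σ : ℤ) + γ).toNat = γ ∧
    (∀ i : ℕ, (i : ℤ) < 2 * (σ : ℤ) + γ →
      extPath σ M (i + 1) - extPath σ M i = -1 ∨
        extPath σ M (i + 1) - extPath σ M i = 1) ∧
    (∀ t : ℕ, t ≤ σ →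
      0 ≤ 2 * (t : ℤ) + M t ∧ 2 * (t : ℤ) + M t ≤ 2 * (σ : ℤ) + γ ∧
        extPath σ M (2 * (t : ℤ) + M t).toNat = M t) :=
  extPath_spec_general σ γ M h0 hend hstep
end
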